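/- arXiv:2105.03006 — 3 statements merged into one kernel-verified Lean document; each statement's English description precedes it below -/
import Mathlib

section
/- Let Ĝ on the player set [n]∪{d} be obtained from a simple voting game W on [n] by adding a dummy voter d, i.e. the winning coalitions of Ĝ are Ŵ = W ∪ {S∪{d} : S∈W}. Then for every player i∈[n] and every S⊆[n], the efficacy scores satisfy: α̂⁺_i(S) = α̂⁺_i(S∪{d}) = α⁺_i(S), α̂⁻_i(S) = α̂⁻_i(S∪{d}) = α⁻_i(S), and α̂_i(S) = α̂_i(S∪{d}) = α_i(S), where α̂ denotes efficacy scores computed in Ĝ and α those computed in W. -/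
open Finset

variable {α : Type*} [Fintype α] [DecidableEq α]

/-- A simple voting game on the player set `α`: a monotone collection of winning
coalitions in which the empty coalition loses and the full coalition wins. -/
def SimpleVotingGame (W : Finset (Finset α)) : Prop :=
  (∀ S T : Finset α, S ∈ W → S ⊆ T → T ∈ W) ∧ (∅ : Finset α) ∉ W ∧ (univ : Finset α) ∈ W

/-- Player `i` is YES-decisive in the division `S`. -/
def YesDecisive (W : Finset (Finset α)) (i : α) (S : Finset α) : Prop :=
  i ∈ S ∧ S ∈ W ∧ S.erase i ∉ W

/-- Player `i` is NO-decisive in the division `S`. -/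
def NoDecisive (W : Finset (Finset α)) (i : α) (S : Finset α) : Prop :=
  i ∉ S ∧ S ∉ W ∧ insert i S ∈ W

/-- The loyal children of a winning division `S`: the winning divisions `S \ {k}`, `k ∈ S`. -/
def LCwin (W : Finset (Finset α)) (S : Finset α) : Finset (Finset α) :=
  (S.image fun k => S.erase k).filter (· ∈ W)

/-- The loyal children of a losing division `S`: the losing divisions `S ∪ {k}`, `k ∉ S`. -/
def LCloss (W : Finset (Finset α)) (S : Finset α) : Finset (Finset α) :=
  (Sᶜ.image fun k => insert k S).filter (· ∉ W)

/-- The YES-efficacy score `α⁺_i(S)`: `1` if `i` is YES-decisive in `S`, `0` if `S` is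
losing or `i ∉ S`, and otherwise the arithmetic mean of `α⁺_i` over the loyal children. -/
noncomputable def alphaPlus (W : Finset (Finset α)) (i : α) (S : Finset α) : ℝ :=
  if i ∈ S ∧ S ∈ W ∧ S.erase i ∉ W then 1
  else if S ∉ W ∨ i ∉ S then 0
  else (∑ T ∈ (LCwin W S).attach, alphaPlus W i T.1) / (LCwin W S).card
termination_by S.card
decreasing_by
  obtain ⟨T, hT⟩ := T
  simp only [LCwin, Finset.mem_filter, Finset.mem_image] at hT
  obtain ⟨⟨k, hk, rfl⟩, -⟩ := hT
  simpa using Finset.card_erase_lt_of_mem hk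

/-- The NO-efficacy score `α⁻_i(S)`: `1` if `i` is NO-decisive in `S`, `0` if `S` is
winning or `i ∈ S`, and otherwise the arithmetic mean of `α⁻_i` over the loyal children. -/
noncomputable def alphaMinus (W : Finset (Finset α)) (i : α) (S : Finset α) : ℝ :=
  if i ∉ S ∧ S ∉ W ∧ insert i S ∈ W then 1
  else if S ∈ W ∨ i ∈ S then 0
  else (∑ T ∈ (LCloss W S).attach, alphaMinus W i T.1) / (LCloss W S).card
termination_by Sᶜ.card
decreasing_by
  obtain ⟨T, hT⟩ := T
  simp only [LCloss, Finset.mem_filter, Finset.mem_image] at hT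
  obtain ⟨⟨k, hk, rfl⟩, -⟩ := hT
  rw [Finset.compl_insert]
  exact Finset.card_erase_lt_of_mem hk

/-- The efficacy score `α_i(S) = α⁺_i(S) + α⁻_i(S)`. -/
noncomputable def alphaScore (W : Finset (Finset α)) (i : α) (S : Finset α) : ℝ :=
  alphaPlus W i S + alphaMinus W i S

/-- The Recursive Measure of YES-voting power (a priori, equiprobable divisions). -/
noncomputable def RMplus (W : Finset (Finset α)) (i : α) : ℝ :=
  (1 / 2 ^ Fintype.card α) * ∑ S : Finset α, alphaPlus W i S

/-- The Recursive Measure of NO-voting power (a priori, equiprobable divisions). -/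
noncomputable def RMminus (W : Finset (Finset α)) (i : α) : ℝ :=
  (1 / 2 ^ Fintype.card α) * ∑ S : Finset α, alphaMinus W i S

/-- The Recursive Measure of voting power of player `i` (a priori):
`RM_i = 2^{-m} · Σ_S α_i(S)` where `m` is the number of players. -/
noncomputable def RM (W : Finset (Finset α)) (i : α) : ℝ :=
  (1 / 2 ^ Fintype.card α) * ∑ S : Finset α, alphaScore W i S

/-- `d` is a dummy voter: `d` is decisive in no division. -/
def IsDummy (W : Finset (Finset α)) (d : α) : Prop :=
  ∀ S : Finset α, d ∉ S → (insert d S ∈ W ↔ S ∈ W)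

/-- Player `j` weakly dominates player `i`. -/
def WeaklyDominates (W : Finset (Finset α)) (j i : α) : Prop :=
  ∀ S : Finset α, i ∉ S → j ∉ S → insert i S ∈ W → insert j S ∈ W

/-- `What` is the game obtained from `W` by player `j` donating its vote to player `i`. -/
def Donation (W What : Finset (Finset α)) (i j : α) : Prop :=
  ∀ S : Finset α, i ∉ S → j ∉ S →
    (insert i (insert j S) ∈ What ↔ insert i (insert j S) ∈ W) ∧
    (insert i S ∈ What ↔ insert i (insert j S) ∈ W) ∧
    (insert j S ∈ What ↔ S ∈ W) ∧
    (S ∈ What ↔ S ∈ W)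

/-- `What` is obtained from `W` by inducing a (weak, symmetric) quarrel between `i` and `j`. -/
def Quarrel (W What : Finset (Finset α)) (i j : α) : Prop :=
  ∀ S : Finset α, i ∉ S → j ∉ S →
    (insert i (insert j S) ∈ What ↔ (insert i S ∈ W ∨ insert j S ∈ W)) ∧
    (S ∈ What ↔ (insert i S ∈ W ∧ insert j S ∈ W)) ∧
    (insert i S ∈ What ↔ insert i S ∈ W) ∧
    (insert j S ∈ What ↔ insert j S ∈ W)

/-- The voting-independent (product) probability of a division `S`, given the
individual YES-vote probabilities `p`. -/
noncomputable def prodDist (p : α → ℝ) (S : Finset α) : ℝ :=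
  (∏ k ∈ S, p k) * ∏ k ∈ Sᶜ, (1 - p k)

/-- The generalized Recursive Measure of YES-voting power under a
voting-independent probability distribution with vote probabilities `p`. -/
noncomputable def RMplusP (W : Finset (Finset α)) (p : α → ℝ) (i : α) : ℝ :=
  ∑ S : Finset α, alphaPlus W i S * prodDist p S

/-- The generalized Recursive Measure of NO-voting power under a
voting-independent probability distribution with vote probabilities `p`. -/
noncomputable def RMminusP (W : Finset (Finset α)) (p : α → ℝ) (i : α) : ℝ :=
  ∑ S : Finset α, alphaMinus W i S * prodDist p S

/-!
Write `S` also for `S.image some` and `S + d` for `insert none (S.image some)`. Both are winning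
in the extended game exactly when `S` wins in `W`, and player `i` is decisive in either exactly
when it is decisive in `S`. The loyal children correspond as well, with one exception: a winning
`S + d` has the extra loyal child `S`, and a losing `S` has the extra loyal child `S + d`.
Induction along the recursion first gives `α̂⁺(S) = α⁺(S)` and `α̂⁻(S + d) = α⁻(S)`; then the
extra child carries exactly the mean over the other children, so adding it does not change
that mean.
-/

theorem add_div_add_one_of_eq_div {x s m : ℝ} (hm : 0 < m) (hx : x = s / m) :
    (x + s) / (m + 1) = x := by
  rw [hx]
  field_simp
  ring

section Recursion

variable {β : Type*} [DecidableEq β] {W : Finset (Finset β)} {i : β} {S T : Finset β}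

theorem ssubset_of_mem_LCwin (hT : T ∈ LCwin W S) : T ⊂ S := by
  obtain ⟨⟨k, hk, rfl⟩, -⟩ := by simpa only [LCwin, mem_filter, mem_image] using hT
  exact erase_ssubset hk

theorem erase_mem_LCwin (hi : i ∈ S) (h : S.erase i ∈ W) : S.erase i ∈ LCwin W S :=
  mem_filter.2 ⟨mem_image_of_mem _ hi, h⟩

theorem alphaPlus_eq_one_of_yesDecisive (h : YesDecisive W i S) : alphaPlus W i S = 1 := by
  rw [alphaPlus]
  exact if_pos h

theorem alphaPlus_eq_zero_of_notMem_or (h : S ∉ W ∨ i ∉ S) : alphaPlus W i S = 0 := by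
  rw [alphaPlus, if_neg (fun hd => by tauto), if_pos h]

theorem alphaPlus_eq_mean (hS : S ∈ W) (hi : i ∈ S) (h : S.erase i ∈ W) :
    alphaPlus W i S = (∑ T ∈ LCwin W S, alphaPlus W i T) / #(LCwin W S) := by
  rw [alphaPlus, if_neg (fun hd => hd.2.2 h), if_neg (by tauto), sum_attach]

theorem alphaPlus_eq_of_mean_eq {γ : Type*} [DecidableEq γ] {V : Finset (Finset γ)} {j : γ}
    {S' : Finset γ} (hS : S' ∈ V ↔ S ∈ W) (hi : j ∈ S' ↔ i ∈ S)
    (herase : S'.erase j ∈ V ↔ S.erase i ∈ W)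
    (hmean : S ∈ W → i ∈ S → S.erase i ∈ W →
      (∑ T ∈ LCwin V S', alphaPlus V j T) / #(LCwin V S') = alphaPlus W i S) :
    alphaPlus V j S' = alphaPlus W i S := by
  by_cases h : S ∉ W ∨ i ∉ S
  · rw [alphaPlus_eq_zero_of_notMem_or h, alphaPlus_eq_zero_of_notMem_or (by rwa [hS, hi])]
  obtain ⟨hSW, hiS⟩ : S ∈ W ∧ i ∈ S := by tauto
  by_cases hSi : S.erase i ∈ W
  · rw [← hmean hSW hiS hSi, alphaPlus_eq_mean (hS.2 hSW) (hi.2 hiS) (herase.2 hSi)]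
  · rw [alphaPlus_eq_one_of_yesDecisive ⟨hiS, hSW, hSi⟩,
      alphaPlus_eq_one_of_yesDecisive ⟨hi.2 hiS, hS.2 hSW, mt herase.1 hSi⟩]

variable [Fintype β]

theorem ssubset_of_mem_LCloss (hT : T ∈ LCloss W S) : S ⊂ T := by
  obtain ⟨⟨k, hk, rfl⟩, -⟩ := by simpa only [LCloss, mem_filter, mem_image] using hT
  exact ssubset_insert (mem_compl.1 hk)

theorem insert_mem_LCloss (hi : i ∉ S) (h : insert i S ∉ W) : insert i S ∈ LCloss W S :=
  mem_filter.2 ⟨mem_image_of_mem _ (mem_compl.2 hi), h⟩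

theorem alphaMinus_eq_one_of_noDecisive (h : NoDecisive W i S) : alphaMinus W i S = 1 := by
  rw [alphaMinus]
  exact if_pos h

theorem alphaMinus_eq_zero_of_mem_or (h : S ∈ W ∨ i ∈ S) : alphaMinus W i S = 0 := by
  rw [alphaMinus, if_neg (fun hd => by tauto), if_pos h]

theorem alphaMinus_eq_mean (hS : S ∉ W) (hi : i ∉ S) (h : insert i S ∉ W) :
    alphaMinus W i S = (∑ T ∈ LCloss W S, alphaMinus W i T) / #(LCloss W S) := by
  rw [alphaMinus, if_neg (fun hd => h hd.2.2), if_neg (by tauto), sum_attach]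

theorem alphaMinus_eq_of_mean_eq {γ : Type*} [Fintype γ] [DecidableEq γ]
    {V : Finset (Finset γ)} {j : γ} {S' : Finset γ} (hS : S' ∈ V ↔ S ∈ W) (hi : j ∈ S' ↔ i ∈ S)
    (hinsert : insert j S' ∈ V ↔ insert i S ∈ W)
    (hmean : S ∉ W → i ∉ S → insert i S ∉ W →
      (∑ T ∈ LCloss V S', alphaMinus V j T) / #(LCloss V S') = alphaMinus W i S) :
    alphaMinus V j S' = alphaMinus W i S := by
  by_cases h : S ∈ W ∨ i ∈ S
  · rw [alphaMinus_eq_zero_of_mem_or h, alphaMinus_eq_zero_of_mem_or (by rwa [hS, hi])]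
  obtain ⟨hSW, hiS⟩ : S ∉ W ∧ i ∉ S := not_or.1 h
  by_cases hSi : insert i S ∈ W
  · rw [alphaMinus_eq_one_of_noDecisive ⟨hiS, hSW, hSi⟩,
      alphaMinus_eq_one_of_noDecisive ⟨mt hi.1 hiS, mt hS.1 hSW, hinsert.2 hSi⟩]
  · rw [← hmean hSW hiS hSi, alphaMinus_eq_mean (mt hS.1 hSW) (mt hi.1 hiS) (mt hinsert.1 hSi)]

end Recursion

section AddDummy

variable {β : Type*} [DecidableEq β]

def addDummy (W : Finset (Finset β)) : Finset (Finset (Option β)) :=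
  W.image (fun S => S.image some) ∪ W.image (fun S => insert none (S.image some))

theorem image_some_injective : Function.Injective fun S : Finset β => S.image some :=
  image_injective (Option.some_injective β)

theorem insert_none_image_some_injective :
    Function.Injective fun S : Finset β => insert none (S.image some) := by
  intro S T h
  ext x
  simpa using congrArg (some x ∈ ·) h

variable {W : Finset (Finset β)} {i : β} {S : Finset β}

@[simp]
theorem insert_none_ne_image_some (S T : Finset β) : insert none (S.image some) ≠ T.image some :=
  fun h => by simpa using congrArg (none ∈ ·) h

@[simp]
theorem image_some_ne_insert_none (S T : Finset β) : S.image some ≠ insert none (T.image some) :=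
  (insert_none_ne_image_some T S).symm

@[simp]
theorem image_some_mem_addDummy : S.image some ∈ addDummy W ↔ S ∈ W := by
  simp [addDummy, image_some_injective.eq_iff]

@[simp]
theorem insert_none_image_some_mem_addDummy :
    insert none (S.image some) ∈ addDummy W ↔ S ∈ W := by
  simp [addDummy, insert_none_image_some_injective.eq_iff]

theorem erase_some_image_some (k : β) :
    (S.image some).erase (some k) = (S.erase k).image some :=
  (image_erase (Option.some_injective β) _ _).symm

theorem erase_some_insert_none (k : β) :
    (insert none (S.image some)).erase (some k) = insert none ((S.erase k).image some) := by
  rw [erase_insert_of_ne (by simp), erase_some_image_some]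

theorem insert_some_image_some (k : β) :
    insert (some k) (S.image some) = (insert k S).image some :=
  (image_insert _ _ _).symm

theorem insert_some_insert_none (k : β) :
    insert (some k) (insert none (S.image some)) = insert none ((insert k S).image some) := by
  rw [insert_comm, insert_some_image_some]

theorem LCwin_addDummy_image_some :
    LCwin (addDummy W) (S.image some) = (LCwin W S).image (·.image some) := by
  simp only [LCwin, filter_image, image_image, Function.comp_def, erase_some_image_some,
    image_some_mem_addDummy]

theorem LCwin_addDummy_insert_none (hS : S ∈ W) :
    LCwin (addDummy W) (insert none (S.image some)) =
      insert (S.image some) ((LCwin W S).image fun T => insert none (T.image some)) := by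
  rw [LCwin, image_insert, erase_insert (by simp), filter_insert, if_pos (by simpa)]
  simp only [LCwin, filter_image, image_image, Function.comp_def, erase_some_insert_none,
    insert_none_image_some_mem_addDummy]

theorem alphaPlus_addDummy_image_some :
    alphaPlus (addDummy W) (some i) (S.image some) = alphaPlus W i S := by
  induction S using WellFoundedLT.induction with
  | _ S ih =>
  refine alphaPlus_eq_of_mean_eq (by simp) (by simp)
    (by simp only [erase_some_image_some, image_some_mem_addDummy]) fun hS hi h => ?_
  rw [LCwin_addDummy_image_some, sum_image image_some_injective.injOn,
    card_image_of_injective _ image_some_injective, alphaPlus_eq_mean hS hi h]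
  congr 1
  exact sum_congr rfl fun T hT => ih T (ssubset_of_mem_LCwin hT)

theorem alphaPlus_addDummy_insert_none :
    alphaPlus (addDummy W) (some i) (insert none (S.image some)) = alphaPlus W i S := by
  induction S using WellFoundedLT.induction with
  | _ S ih =>
  refine alphaPlus_eq_of_mean_eq (by simp) (by simp)
    (by simp only [erase_some_insert_none, insert_none_image_some_mem_addDummy]) fun hS hi h => ?_
  have hnew : S.image some ∉ (LCwin W S).image fun T => insert none (T.image some) := by simp
  rw [LCwin_addDummy_insert_none hS, sum_insert hnew, card_insert_of_notMem hnew,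
    sum_image insert_none_image_some_injective.injOn,
    card_image_of_injective _ insert_none_image_some_injective, alphaPlus_addDummy_image_some,
    sum_congr rfl fun T hT => ih T (ssubset_of_mem_LCwin hT), Nat.cast_add_one]
  exact add_div_add_one_of_eq_div (mod_cast card_pos.2 ⟨_, erase_mem_LCwin hi h⟩)
    (alphaPlus_eq_mean hS hi h)

variable [Fintype β]

theorem compl_image_some : (S.image some)ᶜ = insert none (Sᶜ.image some) := by
  ext (_ | x) <;> simp

theorem compl_insert_none_image_some : (insert none (S.image some))ᶜ = Sᶜ.image some := by
  ext (_ | x) <;> simp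

theorem LCloss_addDummy_insert_none :
    LCloss (addDummy W) (insert none (S.image some)) =
      (LCloss W S).image fun T => insert none (T.image some) := by
  simp only [LCloss, compl_insert_none_image_some, filter_image, image_image, Function.comp_def,
    insert_some_insert_none, insert_none_image_some_mem_addDummy]

theorem LCloss_addDummy_image_some (hS : S ∉ W) :
    LCloss (addDummy W) (S.image some) =
      insert (insert none (S.image some)) ((LCloss W S).image (·.image some)) := by
  rw [LCloss, compl_image_some, image_insert, filter_insert, if_pos (by simpa)]
  simp only [LCloss, filter_image, image_image, Function.comp_def, insert_some_image_some,
    image_some_mem_addDummy]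

theorem alphaMinus_addDummy_insert_none :
    alphaMinus (addDummy W) (some i) (insert none (S.image some)) = alphaMinus W i S := by
  induction S using WellFoundedGT.induction with
  | _ S ih =>
  refine alphaMinus_eq_of_mean_eq (by simp) (by simp)
    (by simp only [insert_some_insert_none, insert_none_image_some_mem_addDummy]) fun hS hi h => ?_
  rw [LCloss_addDummy_insert_none, sum_image insert_none_image_some_injective.injOn,
    card_image_of_injective _ insert_none_image_some_injective, alphaMinus_eq_mean hS hi h]
  congr 1
  exact sum_congr rfl fun T hT => ih T (ssubset_of_mem_LCloss hT)

theorem alphaMinus_addDummy_image_some :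
    alphaMinus (addDummy W) (some i) (S.image some) = alphaMinus W i S := by
  induction S using WellFoundedGT.induction with
  | _ S ih =>
  refine alphaMinus_eq_of_mean_eq (by simp) (by simp)
    (by simp only [insert_some_image_some, image_some_mem_addDummy]) fun hS hi h => ?_
  have hnew : insert none (S.image some) ∉ (LCloss W S).image (·.image some) := by simp
  rw [LCloss_addDummy_image_some hS, sum_insert hnew, card_insert_of_notMem hnew,
    sum_image image_some_injective.injOn, card_image_of_injective _ image_some_injective,
    alphaMinus_addDummy_insert_none, sum_congr rfl fun T hT => ih T (ssubset_of_mem_LCloss hT),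
    Nat.cast_add_one]
  exact add_div_add_one_of_eq_div (mod_cast card_pos.2 ⟨_, insert_mem_LCloss hi h⟩)
    (alphaMinus_eq_mean hS hi h)

end AddDummy

theorem dummy_efficacy_scores_general {n : ℕ} (W : Finset (Finset (Fin n)))
    (What : Finset (Finset (Option (Fin n))))
    (hWhat : What =
      W.image (fun S => S.image some) ∪ W.image (fun S => insert none (S.image some)))
    (i : Fin n) (S : Finset (Fin n)) :
    (alphaPlus What (some i) (S.image some) = alphaPlus W i S ∧
      alphaPlus What (some i) (insert none (S.image some)) = alphaPlus W i S) ∧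
    (alphaMinus What (some i) (S.image some) = alphaMinus W i S ∧
      alphaMinus What (some i) (insert none (S.image some)) = alphaMinus W i S) ∧
    (alphaScore What (some i) (S.image some) = alphaScore W i S ∧
      alphaScore What (some i) (insert none (S.image some)) = alphaScore W i S) := by
  obtain rfl : What = addDummy W := hWhat
  simp only [alphaScore, alphaPlus_addDummy_image_some, alphaPlus_addDummy_insert_none,
    alphaMinus_addDummy_image_some, alphaMinus_addDummy_insert_none, and_self]

/-- adding a dummy voter leaves all efficacy scores unchanged. -/
theorem dummy_efficacy_scores {n : ℕ} (W : Finset (Finset (Fin n)))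
    (hW : SimpleVotingGame W)
    (What : Finset (Finset (Option (Fin n))))
    (hWhat : What =
      W.image (fun S => S.image some) ∪ W.image (fun S => insert none (S.image some)))
    (i : Fin n) (S : Finset (Fin n)) :
    (alphaPlus What (some i) (S.image some) = alphaPlus W i S ∧
      alphaPlus What (some i) (insert none (S.image some)) = alphaPlus W i S) ∧
    (alphaMinus What (some i) (S.image some) = alphaMinus W i S ∧
      alphaMinus What (some i) (insert none (S.image some)) = alphaMinus W i S) ∧
    (alphaScore What (some i) (S.image some) = alphaScore W i S ∧
      alphaScore What (some i) (insert none (S.image some)) = alphaScore W i S) :=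
  dummy_efficacy_scores_general W What hWhat i S
end

section
/- RM satisfies the dummy postulates: in a simple voting game W on [n], (dum-1) if player d is a dummy voter then RM_d = 0; (dum-2) conversely, if RM_i = 0 then player i is a dummy voter; and (dum-3) if Ĝ on [n]∪{d} is obtained from W by adding a dummy voter d (winning coalitions Ŵ = W ∪ {S∪{d} : S∈W}), then for every player i∈[n], the Recursive Measure of i computed in Ĝ (with the factor 2^{−(n+1)}) equals the Recursive Measure of i computed in W (with the factor 2^{−n}). -/
open Finset

variable {α : Type*} [Fintype α] [DecidableEq α]

/-
Everything reduces to the YES-score α⁺. Complementing divisions turns α⁻ of `W` into α⁺ of the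
dual game `{S | Sᶜ ∉ W}`, which has the same dummies. A dummy is never YES-decisive, so its α⁺
vanishes (dum-1). If `RM_i = 0` then α⁻_i vanishes everywhere, so `i` is never
NO-decisive, and monotonicity makes `i` a dummy (dum-2). For (dum-3): removing a dummy `d` from a
winning division `S` does not change α⁺ of another player, because `S \ {d}` is one extra loyal
child of `S` whose score is already the mean over the remaining ones. Hence α⁺ and α⁻ of the
extended game at `T` equal those of `W` at `T \ {d}`, and each division of `W` arises from exactly
two divisions of the extended game, which compensates the extra factor `1/2`.
-/

section Decidable

variable {α : Type*} [DecidableEq α]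

theorem LCwin_eq_image (W : Finset (Finset α)) (S : Finset α) :
    LCwin W S = {k ∈ S | S.erase k ∈ W}.image S.erase := by
  ext T
  simp only [LCwin, mem_filter, mem_image]
  grind

theorem alphaPlus_eq_ite (W : Finset (Finset α)) (i : α) (S : Finset α) :
    alphaPlus W i S =
      if i ∈ S ∧ S ∈ W then
        if S.erase i ∈ W then
          (∑ k ∈ S with S.erase k ∈ W, alphaPlus W i (S.erase k)) / #{k ∈ S | S.erase k ∈ W}
        else 1
      else 0 := by
  rw [alphaPlus, sum_attach (LCwin W S) (alphaPlus W i), LCwin_eq_image,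
    sum_image ((erase_injOn S).mono (filter_subset _ _)),
    card_image_of_injOn ((erase_injOn S).mono (filter_subset _ _))]
  by_cases hi : i ∈ S <;> by_cases hS : S ∈ W <;> by_cases he : S.erase i ∈ W <;>
    simp [hi, hS, he]

theorem alphaPlus_congr {β : Type*} [DecidableEq β] {W : Finset (Finset α)}
    {W' : Finset (Finset β)} {i : α} {i' : β} {S : Finset α} {S' : Finset β}
    (hi : i ∈ S ↔ i' ∈ S') (hS : S ∈ W ↔ S' ∈ W') (he : S.erase i ∈ W ↔ S'.erase i' ∈ W')
    (hmean : i ∈ S → S ∈ W → S.erase i ∈ W →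
      (∑ k ∈ S with S.erase k ∈ W, alphaPlus W i (S.erase k)) / #{k ∈ S | S.erase k ∈ W} =
        (∑ k ∈ S' with S'.erase k ∈ W', alphaPlus W' i' (S'.erase k)) /
          #{k ∈ S' | S'.erase k ∈ W'}) :
    alphaPlus W i S = alphaPlus W' i' S' := by
  rw [alphaPlus_eq_ite, alphaPlus_eq_ite W']
  simp only [hi, hS, he]
  split_ifs with hiS he'
  exacts [hmean (hi.2 hiS.1) (hS.2 hiS.2) (he.2 he'), rfl, rfl]

theorem alphaPlus_nonneg (W : Finset (Finset α)) (i : α) (S : Finset α) :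
    0 ≤ alphaPlus W i S := by
  induction S using Finset.strongInduction with
  | H S ih =>
    rw [alphaPlus_eq_ite]
    split_ifs
    · exact div_nonneg (sum_nonneg fun k hk => ih _ (erase_ssubset (mem_filter.1 hk).1))
        (Nat.cast_nonneg _)
    · exact zero_le_one
    · exact le_rfl

theorem alphaPlus_eq_zero_of_isDummy {W : Finset (Finset α)} {d : α} (hd : IsDummy W d)
    (S : Finset α) : alphaPlus W d S = 0 := by
  induction S using Finset.strongInduction with
  | H S ih =>
    rw [alphaPlus_eq_ite]
    split_ifs with hdS he
    · rw [sum_eq_zero fun k hk => ih _ (erase_ssubset (mem_filter.1 hk).1), zero_div]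
    · exact absurd ((hd _ (notMem_erase d S)).1 (by rw [insert_erase hdS.1]; exact hdS.2)) he
    · rfl

theorem IsDummy.erase_mem_iff {W : Finset (Finset α)} {d : α} (hd : IsDummy W d)
    (S : Finset α) : S.erase d ∈ W ↔ S ∈ W := by
  by_cases hdS : d ∈ S
  · rw [← hd _ (notMem_erase d S), insert_erase hdS]
  · rw [erase_eq_of_notMem hdS]

theorem alphaPlus_erase_of_isDummy {W : Finset (Finset α)} {d i : α} (hd : IsDummy W d)
    (hid : i ≠ d) (S : Finset α) : alphaPlus W i (S.erase d) = alphaPlus W i S := by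
  induction S using Finset.strongInduction with
  | H S ih =>
    by_cases hdS : d ∈ S
    swap
    · rw [erase_eq_of_notMem hdS]
    refine alphaPlus_congr (by simp [hid]) (hd.erase_mem_iff S)
      (by rw [erase_right_comm, hd.erase_mem_iff]) fun hiS hS he => ?_
    have hchildren : {k ∈ S | S.erase k ∈ W} =
        insert d {k ∈ S.erase d | (S.erase d).erase k ∈ W} := by
      ext k
      by_cases hkd : k = d
      · simp [hkd, hdS, hS]
      · rw [mem_filter, mem_insert, mem_filter, mem_erase, erase_right_comm, hd.erase_mem_iff]
        tauto
    have hmean := alphaPlus_eq_ite W i (S.erase d)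
    rw [if_pos ⟨hiS, hS⟩, if_pos he] at hmean
    have hd_notMem : d ∉ {k ∈ S.erase d | (S.erase d).erase k ∈ W} := by simp
    have hpos : (0 : ℝ) < #{k ∈ S.erase d | (S.erase d).erase k ∈ W} := by
      exact_mod_cast card_pos.2 ⟨i, mem_filter.2 ⟨hiS, he⟩⟩
    have hgrandchildren : ∀ k ∈ {k ∈ S.erase d | (S.erase d).erase k ∈ W},
        alphaPlus W i (S.erase k) = alphaPlus W i ((S.erase d).erase k) := fun k hk => by
      rw [← ih _ (erase_ssubset (mem_erase.1 (mem_filter.1 hk).1).2), erase_right_comm]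
    -- the extra loyal child `S.erase d` scores exactly the mean of the others
    rw [hchildren, sum_insert hd_notMem, card_insert_of_notMem hd_notMem,
      sum_congr rfl hgrandchildren, hmean]
    field_simp
    push_cast
    ring

theorem alphaPlus_map {β : Type*} [DecidableEq β] {W : Finset (Finset α)}
    {W' : Finset (Finset β)} (f : α ↪ β) (hW : ∀ S, S.map f ∈ W' ↔ S ∈ W) (i : α)
    (S : Finset α) : alphaPlus W' (f i) (S.map f) = alphaPlus W i S := by
  induction S using Finset.strongInduction with
  | H S ih =>
    refine alphaPlus_congr (mem_map' f) (hW S) (by rw [← map_erase, hW]) fun _ _ _ => ?_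
    simp only [filter_map, sum_map, card_map, Function.comp_apply, ← map_erase, hW]
    congr 1
    exact sum_congr rfl fun k hk => ih _ (erase_ssubset (mem_filter.1 hk).1)

theorem eraseNone_insert_none (T : Finset (Option α)) :
    eraseNone (insert none T) = eraseNone T := by
  ext
  simp

theorem alphaPlus_some_of_mem_iff_eraseNone {W : Finset (Finset α)}
    {Ŵ : Finset (Finset (Option α))} (hŴ : ∀ T, T ∈ Ŵ ↔ eraseNone T ∈ W) (i : α)
    (T : Finset (Option α)) : alphaPlus Ŵ (some i) T = alphaPlus W i (eraseNone T) := by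
  have hnone : IsDummy Ŵ none := fun T _ => by rw [hŴ, hŴ, eraseNone_insert_none]
  rw [← alphaPlus_erase_of_isDummy hnone (Option.some_ne_none i), ← map_some_eraseNone]
  exact alphaPlus_map Function.Embedding.some (fun S => by rw [hŴ, eraseNone_map_some]) i _

def dummyExtension (W : Finset (Finset α)) : Finset (Finset (Option α)) :=
  W.image (fun S => S.image some) ∪ W.image (fun S => insert none (S.image some))

theorem mem_dummyExtension (W : Finset (Finset α)) (T : Finset (Option α)) :
    T ∈ dummyExtension W ↔ eraseNone T ∈ W := by
  simp only [dummyExtension, mem_union, mem_image]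
  constructor
  · rintro (⟨S, hS, rfl⟩ | ⟨S, hS, rfl⟩)
    · rwa [eraseNone_image_some]
    · rwa [eraseNone_insert_none, eraseNone_image_some]
  · intro hT
    by_cases hnone : none ∈ T
    · exact Or.inr ⟨_, hT, by rw [image_some_eraseNone, insert_erase hnone]⟩
    · exact Or.inl ⟨_, hT, by rw [image_some_eraseNone, erase_eq_of_notMem hnone]⟩

end Decidable

def dualGame (W : Finset (Finset α)) : Finset (Finset α) := {S | Sᶜ ∉ W}

theorem mem_dualGame {W : Finset (Finset α)} {S : Finset α} : S ∈ dualGame W ↔ Sᶜ ∉ W := by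
  simp [dualGame]

theorem LCloss_compl (W : Finset (Finset α)) (S : Finset α) :
    LCloss W Sᶜ = {k ∈ S | S.erase k ∈ dualGame W}.image fun k => (S.erase k)ᶜ := by
  ext T
  simp only [LCloss, mem_filter, mem_image, compl_compl, mem_dualGame, compl_erase]
  grind

theorem alphaPlus_dualGame (W : Finset (Finset α)) (i : α) (S : Finset α) :
    alphaPlus (dualGame W) i S = alphaMinus W i Sᶜ := by
  induction S using Finset.strongInduction with
  | H S ih =>
    have hinj : Set.InjOn (fun k => (S.erase k)ᶜ)
        ↑({k ∈ S | S.erase k ∈ dualGame W} : Finset α) :=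
      (compl_injective.comp_injOn (erase_injOn S)).mono fun _ hk => (mem_filter.1 hk).1
    rw [alphaPlus_eq_ite, alphaMinus, sum_attach (LCloss W Sᶜ) (alphaMinus W i), LCloss_compl,
      sum_image hinj, card_image_of_injOn hinj,
      sum_congr rfl fun k hk => ih _ (erase_ssubset (mem_filter.1 hk).1)]
    by_cases hi : i ∈ S <;> by_cases hS : Sᶜ ∈ W <;> by_cases he : insert i Sᶜ ∈ W <;>
      simp [hi, hS, he, mem_dualGame, compl_erase]

theorem alphaMinus_eq_alphaPlus_dualGame (W : Finset (Finset α)) (i : α) (S : Finset α) :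
    alphaMinus W i S = alphaPlus (dualGame W) i Sᶜ := by
  rw [alphaPlus_dualGame, compl_compl]

theorem IsDummy.dualGame {W : Finset (Finset α)} {d : α} (hd : IsDummy W d) :
    IsDummy (dualGame W) d := by
  intro S hdS
  have := hd (Sᶜ.erase d) (notMem_erase d _)
  rw [insert_erase (mem_compl.2 hdS)] at this
  rw [mem_dualGame, mem_dualGame, compl_insert, this]

theorem alphaMinus_nonneg (W : Finset (Finset α)) (i : α) (S : Finset α) :
    0 ≤ alphaMinus W i S := by
  rw [alphaMinus_eq_alphaPlus_dualGame]
  exact alphaPlus_nonneg _ _ _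

theorem alphaMinus_eq_zero_of_isDummy {W : Finset (Finset α)} {d : α} (hd : IsDummy W d)
    (S : Finset α) : alphaMinus W d S = 0 := by
  rw [alphaMinus_eq_alphaPlus_dualGame]
  exact alphaPlus_eq_zero_of_isDummy hd.dualGame _

theorem RM_eq_zero_of_isDummy {W : Finset (Finset α)} {d : α} (hd : IsDummy W d) :
    RM W d = 0 := by
  simp [RM, alphaScore, alphaPlus_eq_zero_of_isDummy hd, alphaMinus_eq_zero_of_isDummy hd]

theorem isDummy_of_RM_eq_zero {W : Finset (Finset α)} (hW : SimpleVotingGame W) {i : α}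
    (h : RM W i = 0) : IsDummy W i := by
  have hsum : ∑ S, alphaScore W i S = 0 := by simpa [RM] using h
  have hscore : ∀ S, alphaScore W i S = 0 := fun S =>
    (sum_eq_zero_iff_of_nonneg fun T _ =>
      add_nonneg (alphaPlus_nonneg W i T) (alphaMinus_nonneg W i T)).1 hsum S (mem_univ S)
  intro S hiS
  refine ⟨fun hins => ?_, fun hS => hW.1 S _ hS (subset_insert i S)⟩
  by_contra hS
  have hnoDecisive : alphaMinus W i S = 1 := by rw [alphaMinus, if_pos ⟨hiS, hS, hins⟩]
  have hzero : alphaPlus W i S + alphaMinus W i S = 0 := hscore S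
  linarith [alphaPlus_nonneg W i S]

theorem eraseNone_compl (T : Finset (Option α)) : eraseNone Tᶜ = (eraseNone T)ᶜ := by
  ext
  simp

theorem mem_dualGame_iff_eraseNone {W : Finset (Finset α)} {Ŵ : Finset (Finset (Option α))}
    (hŴ : ∀ T, T ∈ Ŵ ↔ eraseNone T ∈ W) (T : Finset (Option α)) :
    T ∈ dualGame Ŵ ↔ eraseNone T ∈ dualGame W := by
  rw [mem_dualGame, mem_dualGame, hŴ, eraseNone_compl]

theorem alphaMinus_some_of_mem_iff_eraseNone {W : Finset (Finset α)}
    {Ŵ : Finset (Finset (Option α))} (hŴ : ∀ T, T ∈ Ŵ ↔ eraseNone T ∈ W) (i : α)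
    (T : Finset (Option α)) : alphaMinus Ŵ (some i) T = alphaMinus W i (eraseNone T) := by
  rw [alphaMinus_eq_alphaPlus_dualGame, alphaMinus_eq_alphaPlus_dualGame,
    alphaPlus_some_of_mem_iff_eraseNone (mem_dualGame_iff_eraseNone hŴ), eraseNone_compl]

theorem card_filter_eraseNone_eq (S : Finset α) :
    #{T : Finset (Option α) | eraseNone T = S} = 2 := by
  have hfiber : ({T | eraseNone T = S} : Finset (Finset (Option α))) =
      {S.map Function.Embedding.some, insertNone S} := by
    ext T
    simp only [mem_filter, mem_univ, true_and, mem_insert, mem_singleton]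
    constructor
    · rintro rfl
      by_cases hT : none ∈ T
      · exact Or.inr (by rw [insertNone_eraseNone, insert_eq_of_mem hT])
      · exact Or.inl (by rw [map_some_eraseNone, erase_eq_of_notMem hT])
    · rintro (rfl | rfl)
      exacts [eraseNone_map_some S, eraseNone_insertNone S]
  rw [hfiber, card_pair]
  intro h
  simpa using congrArg (none ∈ ·) h

theorem sum_comp_eraseNone {M : Type*} [AddCommMonoid M] (g : Finset α → M) :
    ∑ T : Finset (Option α), g (eraseNone T) = 2 • ∑ S, g S := by
  rw [← sum_fiberwise' univ eraseNone g, smul_sum]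
  simp_rw [sum_const, card_filter_eraseNone_eq]

theorem RM_dummyExtension_some (W : Finset (Finset α)) (i : α) :
    RM (dummyExtension W) (some i) = RM W i := by
  simp only [RM, alphaScore, alphaPlus_some_of_mem_iff_eraseNone (mem_dummyExtension W),
    alphaMinus_some_of_mem_iff_eraseNone (mem_dummyExtension W)]
  rw [sum_comp_eraseNone (fun S => alphaPlus W i S + alphaMinus W i S), Fintype.card_option,
    nsmul_eq_mul, Nat.cast_ofNat, pow_succ]
  field_simp

/-- RM satisfies the dummy postulates (dum-1), (dum-2) and (dum-3). -/
theorem rm_dummy_postulates {n : ℕ} (W : Finset (Finset (Fin n)))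
    (hW : SimpleVotingGame W) :
    (∀ d : Fin n, IsDummy W d → RM W d = 0) ∧
    (∀ i : Fin n, RM W i = 0 → IsDummy W i) ∧
    (∀ What : Finset (Finset (Option (Fin n))),
      What =
        W.image (fun S => S.image some) ∪ W.image (fun S => insert none (S.image some)) →
      ∀ i : Fin n, RM What (some i) = RM W i) := by
  refine ⟨fun d hd => RM_eq_zero_of_isDummy hd, fun i hi => isDummy_of_RM_eq_zero hW hi, ?_⟩
  rintro What rfl i
  exact RM_dummyExtension_some W i
end

section
/- Let W be a simple voting game on [n] and let Ŵ be the game obtained by inducing a weak, symmetric quarrel between players i and j, i.e. for every S⊆[n] with i,j∉S: S∪{i,j}∈Ŵ ⟺ (S∪{i}∈W or S∪{j}∈W); S∈Ŵ ⟺ (S∪{i}∈W and S∪{j}∈W); S∪{i}∈Ŵ ⟺ S∪{i}∈W; and S∪{j}∈Ŵ ⟺ S∪{j}∈W. Then Ŵ is monotonic: if S∈Ŵ and S⊆T then T∈Ŵ. -/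
open Finset

variable {α : Type*} [Fintype α] [DecidableEq α]

/-! A quarrel determines `Ŵ` from `W`: a coalition containing `i` wins iff it still wins in `W`
after `j` leaves, symmetrically for `j`, and a coalition containing neither wins iff it wins in
`W` after either of them joins. The first two clauses are upward closed because `W` is; a
coalition of the third kind that gains `i` or `j` passes to one of the first two. -/

section QuarrelGame

variable {β : Type*} [DecidableEq β]

def quarrelGame (W : Finset (Finset β)) (i j : β) : Set (Finset β) :=
  {S | (i ∈ S ∧ S.erase j ∈ W) ∨ (j ∈ S ∧ S.erase i ∈ W) ∨
    (i ∉ S ∧ j ∉ S ∧ insert i S ∈ W ∧ insert j S ∈ W)}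

theorem Quarrel.coe_eq_quarrelGame {W What : Finset (Finset β)} {i j : β}
    (hq : Quarrel W What i j) (hij : i ≠ j) : (What : Set (Finset β)) = quarrelGame W i j := by
  ext S
  simp only [mem_coe, quarrelGame, Set.mem_ofPred_eq]
  by_cases hi : i ∈ S <;> by_cases hj : j ∈ S
  · obtain ⟨B, hiB, hjB, rfl⟩ : ∃ B, i ∉ B ∧ j ∉ B ∧ S = insert i (insert j B) :=
      ⟨(S.erase i).erase j, by simp, by simp,
        by rw [insert_erase (mem_erase.2 ⟨hij.symm, hj⟩), insert_erase hi]⟩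
    simp [(hq B hiB hjB).1, hiB, hjB, hij, hij.symm, erase_insert_of_ne]
  · obtain ⟨B, hiB, hjB, rfl⟩ : ∃ B, i ∉ B ∧ j ∉ B ∧ S = insert i B :=
      ⟨S.erase i, by simp, fun h => hj (mem_of_mem_erase h), (insert_erase hi).symm⟩
    simp [(hq B hiB hjB).2.2.1, hiB, hjB, hij.symm]
  · obtain ⟨B, hiB, hjB, rfl⟩ : ∃ B, i ∉ B ∧ j ∉ B ∧ S = insert j B :=
      ⟨S.erase j, fun h => hi (mem_of_mem_erase h), by simp, (insert_erase hj).symm⟩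
    simp [(hq B hiB hjB).2.2.2, hiB, hjB, hij]
  · simp [(hq S hi hj).2.1, hi, hj]

theorem isUpperSet_quarrelGame {W : Finset (Finset β)} (hW : IsUpperSet (W : Set (Finset β)))
    {i j : β} (hij : i ≠ j) : IsUpperSet (quarrelGame W i j) := by
  rintro S T hST (⟨hiS, hSW⟩ | ⟨hjS, hSW⟩ | ⟨hiS, hjS, hiW, hjW⟩)
  · exact Or.inl ⟨hST hiS, hW (erase_subset_erase j hST) hSW⟩
  · exact Or.inr (Or.inl ⟨hST hjS, hW (erase_subset_erase i hST) hSW⟩)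
  by_cases hiT : i ∈ T
  · exact Or.inl ⟨hiT, hW (subset_erase.2 ⟨insert_subset hiT hST, by simp [hij.symm, hjS]⟩) hiW⟩
  by_cases hjT : j ∈ T
  · exact Or.inr (Or.inl ⟨hjT, hW (subset_erase.2 ⟨insert_subset hjT hST, by simp [hij, hiS]⟩) hjW⟩)
  exact Or.inr (Or.inr ⟨hiT, hjT, hW (insert_subset_insert i hST) hiW,
    hW (insert_subset_insert j hST) hjW⟩)

end QuarrelGame

/-- the game obtained by inducing a quarrel is monotonic. -/
theorem quarrel_monotone {n : ℕ} (W What : Finset (Finset (Fin n)))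
    (hW : SimpleVotingGame W) (i j : Fin n) (hij : i ≠ j)
    (hq : Quarrel W What i j) :
    ∀ S T : Finset (Fin n), S ∈ What → S ⊆ T → T ∈ What := by
  have hWup : IsUpperSet (W : Set (Finset (Fin n))) := fun S T hST hS => hW.1 S T hS hST
  have hup := isUpperSet_quarrelGame hWup hij
  rw [← hq.coe_eq_quarrelGame hij] at hup
  exact fun S T hS hST => hup hST hS
end
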